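/- arXiv:2312.17631 — 3 statements merged into one kernel-verified Lean document; each statement's English description precedes it below -/
import Mathlib

section
/- The composition of two selfic surjections is selfic: if f: {1,...,k} → {1,...,ℓ} and g: {1,...,ℓ} → {1,...,m} are selfic surjections, then g ∘ f is a selfic surjection. -/
/-!
Monotonicity of `j ↦ min f⁻¹(j)` says exactly that every value below an attained value `f i`
is already attained at some index `≤ i`. This property passes through composition: a value
below `g (f i)` is `g s` with `s ≤ f i`, and `s` is `f i'` with `i' ≤ i`.
-/

/-- `firstIn f j` is the minimum of the preimage `f⁻¹(j)`. -/
def firstIn {k l : ℕ} (f : Fin k → Fin l) (j : Fin l) : WithTop (Fin k) :=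
  (Finset.univ.filter fun i => f i = j).min

/-- A surjection `f : Fin k → Fin l` is *selfic* if `j ↦ min f⁻¹(j)` is monotone. -/
def IsSelfic {k l : ℕ} (f : Fin k → Fin l) : Prop :=
  Function.Surjective f ∧ Monotone (firstIn f)

section

variable {k l m : ℕ}

theorem firstIn_le_coe_iff {f : Fin k → Fin l} {j : Fin l} {i : Fin k} :
    firstIn f j ≤ i ↔ ∃ i' ≤ i, f i' = j := by
  constructor
  · intro h
    obtain ⟨i', hi'⟩ := WithTop.ne_top_iff_exists.mp (ne_top_of_le_ne_top WithTop.coe_ne_top h)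
    exact ⟨i', WithTop.coe_le_coe.mp (hi' ▸ h), (Finset.mem_filter.mp (Finset.mem_of_min hi'.symm)).2⟩
  · rintro ⟨i', hi', rfl⟩
    exact (Finset.min_le (by simp)).trans (WithTop.coe_le_coe.mpr hi')

theorem monotone_firstIn_iff {f : Fin k → Fin l} :
    Monotone (firstIn f) ↔ ∀ i j, j ≤ f i → ∃ i' ≤ i, f i' = j := by
  constructor
  · intro hf i j hj
    exact firstIn_le_coe_iff.mp ((hf hj).trans (firstIn_le_coe_iff.mpr ⟨i, le_rfl, rfl⟩))
  · intro hf j j' hj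
    induction h : firstIn f j' using WithTop.recTopCoe with
    | top => exact le_top
    | coe i =>
      obtain ⟨i', hi', rfl⟩ := firstIn_le_coe_iff.mp h.le
      obtain ⟨i'', hi'', hfi''⟩ := hf i' j hj
      exact firstIn_le_coe_iff.mpr ⟨i'', hi''.trans hi', hfi''⟩

theorem Monotone.firstIn_comp {f : Fin k → Fin l} {g : Fin l → Fin m}
    (hf : Monotone (firstIn f)) (hg : Monotone (firstIn g)) : Monotone (firstIn (g ∘ f)) := by
  rw [monotone_firstIn_iff] at hf hg ⊢
  intro i j hj
  obtain ⟨s, hs, rfl⟩ := hg (f i) j hj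
  obtain ⟨i', hi', rfl⟩ := hf i s hs
  exact ⟨i', hi', rfl⟩

end

/-- the composition of selfic surjections is a selfic surjection. -/
theorem isSelfic_comp {k l m : ℕ} (f : Fin k → Fin l) (g : Fin l → Fin m)
    (hf : IsSelfic f) (hg : IsSelfic g) : IsSelfic (g ∘ f) :=
  ⟨hg.1.comp hf.1, hf.2.firstIn_comp hg.2⟩
end

section
/- The following data form a category Epifin: objects are selfic surjections p: {1,...,k} → {1,...,ℓ}; a morphism from p: {1,...,k} → {1,...,ℓ} to q: {1,...,m} → {1,...,n} is a pair of maps (u: {1,...,k} → {1,...,m}, v: {1,...,ℓ} → {1,...,n}) with q∘u = v∘p such that the induced map from {1,...,k} to the pullback {1,...,m} ×_{{1,...,n}} {1,...,ℓ} is injective. Composition of two such morphisms again satisfies the injectivity condition, and identities satisfy it, so Epifin is a well-defined category. -/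
/-- The condition for `(u, v)` to be a morphism in `Epifin` from the selfic
surjection `p : Fin k → Fin l` to the selfic surjection `q : Fin m → Fin n`:
the square commutes and the induced map into the pullback
`Fin m ×_{Fin n} Fin l` is injective. -/
def EpiMor {k l m n : ℕ} (p : Fin k → Fin l) (q : Fin m → Fin n)
    (u : Fin k → Fin m) (v : Fin l → Fin n) : Prop :=
  q ∘ u = v ∘ p ∧ Function.Injective fun i => (u i, p i)

theorem Function.Injective.pair_comp {α β γ δ ε : Type*} {p : α → β} {q : γ → δ}
    {u : α → γ} {v : β → δ} {u' : γ → ε} (hc : q ∘ u = v ∘ p)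
    (hi : Function.Injective fun i => (u i, p i))
    (hi' : Function.Injective fun j => (u' j, q j)) :
    Function.Injective fun i => (u' (u i), p i) := by
  intro i j hij
  obtain ⟨hu', hp⟩ := Prod.mk.inj hij
  have hq : q (u i) = q (u j) :=
    calc q (u i) = v (p i) := congrFun hc i
      _ = v (p j) := congrArg v hp
      _ = q (u j) := (congrFun hc j).symm
  exact hi (Prod.ext (hi' (Prod.ext hu' hq)) hp)

theorem EpiMor.id {k l : ℕ} (p : Fin k → Fin l) : EpiMor p p id id :=
  ⟨rfl, fun _ _ h => (Prod.mk.inj h).1⟩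

theorem EpiMor.comp {k l m n m' n' : ℕ} {p : Fin k → Fin l} {q : Fin m → Fin n}
    {r : Fin m' → Fin n'} {u : Fin k → Fin m} {v : Fin l → Fin n} {u' : Fin m → Fin m'}
    {v' : Fin n → Fin n'} (huv : EpiMor p q u v) (huv' : EpiMor q r u' v') :
    EpiMor p r (u' ∘ u) (v' ∘ v) :=
  ⟨by rw [← Function.comp_assoc, huv'.1, Function.comp_assoc, huv.1, Function.comp_assoc],
    Function.Injective.pair_comp (u' := u') huv.1 huv.2 huv'.2⟩

theorem epifin_is_category_general {k l m n m' n' : ℕ}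
    (p : Fin k → Fin l) (q : Fin m → Fin n) (r : Fin m' → Fin n')
    (u : Fin k → Fin m) (v : Fin l → Fin n)
    (u' : Fin m → Fin m') (v' : Fin n → Fin n')
    (huv : EpiMor p q u v) (huv' : EpiMor q r u' v') :
    EpiMor p p (id : Fin k → Fin k) (id : Fin l → Fin l) ∧
      EpiMor p r (u' ∘ u) (v' ∘ v) :=
  ⟨EpiMor.id p, huv.comp huv'⟩

/-- `Epifin` is a well-defined category: identities are morphisms
and the composition of two morphisms is again a morphism (in particular, the
injectivity-into-the-pullback condition is preserved under composition). -/
theorem epifin_is_category {k l m n m' n' : ℕ}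
    (p : Fin k → Fin l) (q : Fin m → Fin n) (r : Fin m' → Fin n')
    (hp : IsSelfic p) (hq : IsSelfic q) (hr : IsSelfic r)
    (u : Fin k → Fin m) (v : Fin l → Fin n)
    (u' : Fin m → Fin m') (v' : Fin n → Fin n')
    (huv : EpiMor p q u v) (huv' : EpiMor q r u' v') :
    EpiMor p p (id : Fin k → Fin k) (id : Fin l → Fin l) ∧
      EpiMor p r (u' ∘ u) (v' ∘ v) :=
  epifin_is_category_general p q r u v u' v' huv huv'
end

section
/- Let π: E → M be a covering map, let z ∈ M, and let x ∈ π⁻¹(z). For each r ≥ 0, unique path lifting induces a bijection between: strings of r composable 'configuration morphisms' in M with ultimate target the singleton configuration at z (each morphism being a pair of finite configurations together with a Moore homotopy of injections whose tracks stay injective), and strings of r composable configuration morphisms in E with ultimate target the singleton configuration at x. -/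
/-- A string of `r` composable "configuration morphisms" in a space `X`, with
ultimate target the singleton configuration at `x` (injectivity conditions are
recorded separately in `RawString.IsConf`).  The `i`-th morphism consists of a
map `u i` of index sets and a Moore homotopy `h i` of duration `a i` from the
`i`-th configuration to the reindexed `(i+1)`-st configuration. -/
structure RawString (X : Type*) [TopologicalSpace X] (r : ℕ) (x : X) where
  k : Fin (r + 1) → ℕ
  c : ∀ i, Fin (k i) → X
  u : ∀ i : Fin r, Fin (k i.castSucc) → Fin (k i.succ)
  a : Fin r → ℝ
  ha : ∀ i, 0 ≤ a i
  h : ∀ i : Fin r, Fin (k i.castSucc) → C(Set.Icc (0 : ℝ) (a i), X)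
  hk : k (Fin.last r) = 1
  hx : ∀ j, c (Fin.last r) j = x
  h0 : ∀ i j, h i j ⟨0, Set.left_mem_Icc.mpr (ha i)⟩ = c i.castSucc j
  h1 : ∀ i j, h i j ⟨a i, Set.right_mem_Icc.mpr (ha i)⟩ = c i.succ (u i j)

/-- The condition that a raw string is a genuine string of configuration
morphisms: all configurations are injective and the Moore homotopies pass
through injective maps. -/
def RawString.IsConf {X : Type*} [TopologicalSpace X] {r : ℕ} {x : X}
    (s : RawString X r x) : Prop :=
  (∀ i, Function.Injective (s.c i)) ∧
    ∀ (i : Fin r) (t : Set.Icc (0 : ℝ) (s.a i)),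
      Function.Injective fun j => s.h i j t

/-- Pushforward of a raw string along a continuous map. -/
def RawString.map {X Y : Type*} [TopologicalSpace X] [TopologicalSpace Y]
    {r : ℕ} {x : X} (s : RawString X r x) (π : C(X, Y)) :
    RawString Y r (π x) where
  k := s.k
  c := fun i j => π (s.c i j)
  u := s.u
  a := s.a
  ha := s.ha
  h := fun i j => π.comp (s.h i j)
  hk := s.hk
  hx := fun j => congrArg π (s.hx j)
  h0 := fun i j => congrArg π (s.h0 i j)
  h1 := fun i j => congrArg π (s.h1 i j)


open Set in
/-- Backwards path lifting along a covering map, on a real interval: a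
continuous map `γ : ℝ → M` can be lifted over `[b, c]` with prescribed value
over the right endpoint `c`. -/
theorem IsCoveringMap.clift {E M : Type*} [TopologicalSpace E] [TopologicalSpace M]
    {π : E → M} (hπ : IsCoveringMap π) (γ : C(ℝ, M)) (b c : ℝ) (hbc : b ≤ c)
    (e : E) (he : π e = γ c) :
    ∃ Γ : C(ℝ, E), Γ c = e ∧ ∀ s ∈ Set.Icc b c, π (Γ s) = γ s := by
  classical
  set S : Set ℝ :=
    {t | t ∈ Icc b c ∧ ∃ Γ : C(ℝ, E), Γ c = e ∧ ∀ s ∈ Set.Icc t c, π (Γ s) = γ s} with hSdef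
  have hcS : c ∈ S := by
    refine ⟨⟨hbc, le_refl c⟩, ContinuousMap.const ℝ e, rfl, fun s hs => ?_⟩
    obtain rfl : s = c := le_antisymm hs.2 hs.1
    simpa using he
  have hne : S.Nonempty := ⟨c, hcS⟩
  have hbdd : BddBelow S := ⟨b, fun t ht => ht.1.1⟩
  set m := sInf S with hm
  have hbm : b ≤ m := le_csInf hne fun t ht => ht.1.1
  have hmc : m ≤ c := csInf_le hbdd hcS
  have hfib : Nonempty (π ⁻¹' {γ m}) := by
    by_contra hcon
    rw [not_nonempty_iff] at hcon
    obtain ⟨-, U, hmU, hU, -, H, -⟩ := hπ (γ m)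
    obtain ⟨ε, hε, hball⟩ := Metric.mem_nhds_iff.mp
      (γ.continuous.continuousAt.preimage_mem_nhds (hU.mem_nhds hmU))
    obtain ⟨s, hsS, hsε⟩ : ∃ s ∈ S, s < m + ε := exists_lt_of_csInf_lt hne (by linarith)
    have hms : m ≤ s := csInf_le hbdd hsS
    obtain ⟨⟨hbs, hsc⟩, Γ, hΓc, hΓ⟩ := hsS
    have hsU : γ s ∈ U := hball (by
      rw [Metric.mem_ball, Real.dist_eq, abs_lt]; constructor <;> linarith)
    have hΓU : π (Γ s) ∈ U := by rw [hΓ s ⟨le_refl s, hsc⟩]; exact hsU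
    exact hcon.false (H ⟨Γ s, hΓU⟩).2
  obtain ⟨T, hmem⟩ : ∃ T : Bundle.Trivialization (π ⁻¹' {γ m}) π, γ m ∈ T.baseSet :=
    ⟨_, (hπ (γ m)).mem_toTrivialization_baseSet⟩
  have hnhds : γ ⁻¹' T.baseSet ∈ nhds m :=
    γ.continuous.continuousAt.preimage_mem_nhds (T.open_baseSet.mem_nhds hmem)
  obtain ⟨ε, hε, hball⟩ := Metric.mem_nhds_iff.mp hnhds
  set δ := ε / 2 with hδdef
  have hδ : 0 < δ := by positivity
  obtain ⟨s, hsS, hsδ⟩ : ∃ s ∈ S, s < m + δ := exists_lt_of_csInf_lt hne (by linarith)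
  have hms : m ≤ s := csInf_le hbdd hsS
  obtain ⟨⟨hbs, hsc⟩, Γ, hΓc, hΓ⟩ := hsS
  set t' := max (m - δ) b with ht'def
  have ht's : t' ≤ s := max_le (by linarith) hbs
  have hrange : ∀ r : ℝ, γ (max (min r s) t') ∈ T.baseSet := by
    intro r
    apply hball
    have h1 : max (min r s) t' ≤ s := max_le (min_le_right r s) ht's
    have h2 : m - δ ≤ max (min r s) t' := le_trans (le_max_left _ b) (le_max_right _ _)
    simp only [Metric.mem_ball, Real.dist_eq, abs_sub_lt_iff]
    constructor <;> linarith
  set q := (T (Γ s)).2 with hq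
  set σ : ℝ → E := fun r => T.toOpenPartialHomeomorph.symm (γ (max (min r s) t'), q) with hσdef
  have htarget : ∀ r : ℝ, (γ (max (min r s) t'), q) ∈ T.target := by
    intro r
    rw [T.target_eq]
    exact ⟨hrange r, mem_univ _⟩
  have hσcont : Continuous σ := by
    have h1 : Continuous fun r : ℝ => (γ (max (min r s) t'), q) :=
      ((γ.continuous.comp ((continuous_id.min continuous_const).max
        continuous_const)).prodMk continuous_const)
    exact T.toOpenPartialHomeomorph.continuousOn_symm.comp_continuous h1 htarget
  have hπΓs : π (Γ s) = γ s := hΓ s ⟨le_refl s, hsc⟩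
  have hsrc : Γ s ∈ T.source := by
    rw [T.mem_source, hπΓs]
    have := hrange s
    simpa [min_self, max_eq_left ht's] using this
  have hbd : σ s = Γ s := by
    have h1 : (γ s, q) = T (Γ s) := by
      rw [← hπΓs]
      exact T.mk_proj_snd hsrc
    simp only [hσdef, min_self, max_eq_left ht's, h1]
    exact T.toOpenPartialHomeomorph.left_inv hsrc
  have hΓ'cont : Continuous fun r : ℝ => if r ≤ s then σ r else Γ r :=
    Continuous.if_le hσcont Γ.continuous continuous_id continuous_const
      fun r hr => by rw [hr, hbd]
  have ht'S : t' ∈ S := by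
    refine ⟨⟨le_max_right _ _, max_le (by linarith) hbc⟩, ⟨_, hΓ'cont⟩, ?_, ?_⟩
    · simp only [ContinuousMap.coe_mk]
      split_ifs with hcs
      · obtain rfl : c = s := le_antisymm hcs hsc
        rw [hbd, hΓc]
      · exact hΓc
    · intro r hr
      simp only [ContinuousMap.coe_mk]
      split_ifs with hrs
      · have hmin : min r s = r := min_eq_left hrs
        have hmax : max (min r s) t' = r := by rw [hmin]; exact max_eq_left hr.1
        have h2 := T.proj_symm_apply (htarget r)
        rw [hmax] at h2
        simpa [hσdef, hmax] using h2
      · exact hΓ r ⟨le_of_lt (lt_of_not_ge hrs), hr.2⟩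
  have hmt' : m ≤ t' := csInf_le hbdd ht'S
  have hmb : m ≤ b := by
    rcases le_max_iff.mp hmt' with h | h
    · linarith
    · exact h
  have ht'b : t' = b := max_eq_right (by linarith)
  rw [ht'b] at ht'S
  exact ht'S.2

theorem exists_liftSeg {E M : Type*} [TopologicalSpace E] [TopologicalSpace M]
    {π : E → M} (hπ : IsCoveringMap π) {a : ℝ} (ha : 0 ≤ a)
    (γ : C(Set.Icc (0:ℝ) a, M)) (e : E) (he : π e = γ ⟨a, Set.right_mem_Icc.mpr ha⟩) :
    ∃ Γ : C(Set.Icc (0:ℝ) a, E),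
      (∀ t, π (Γ t) = γ t) ∧ Γ ⟨a, Set.right_mem_Icc.mpr ha⟩ = e := by
  obtain ⟨Γ, hΓc, hΓ⟩ := hπ.clift (γ.comp ⟨Set.projIcc 0 a ha, continuous_projIcc⟩) 0 a ha e
    (by simpa [Set.projIcc_of_mem ha (Set.right_mem_Icc.mpr ha)] using he)
  refine ⟨Γ.comp ⟨Subtype.val, continuous_subtype_val⟩, fun t => ?_, hΓc⟩
  have := hΓ t.1 t.2
  simpa [Set.projIcc_of_mem ha t.2] using this

/-- A choice of lift of a Moore path segment ending at a prescribed point. -/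
noncomputable def liftSeg {E M : Type*} [TopologicalSpace E] [TopologicalSpace M]
    {π : E → M} (hπ : IsCoveringMap π) {a : ℝ} (ha : 0 ≤ a)
    (γ : C(Set.Icc (0:ℝ) a, M)) (e : E) (he : π e = γ ⟨a, Set.right_mem_Icc.mpr ha⟩) :
    C(Set.Icc (0:ℝ) a, E) :=
  (exists_liftSeg hπ ha γ e he).choose

lemma liftSeg_proj {E M : Type*} [TopologicalSpace E] [TopologicalSpace M]
    {π : E → M} (hπ : IsCoveringMap π) {a : ℝ} (ha : 0 ≤ a)
    (γ : C(Set.Icc (0:ℝ) a, M)) (e : E) (he : π e = γ ⟨a, Set.right_mem_Icc.mpr ha⟩)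
    (t : Set.Icc (0:ℝ) a) : π (liftSeg hπ ha γ e he t) = γ t :=
  (exists_liftSeg hπ ha γ e he).choose_spec.1 t

lemma liftSeg_top {E M : Type*} [TopologicalSpace E] [TopologicalSpace M]
    {π : E → M} (hπ : IsCoveringMap π) {a : ℝ} (ha : 0 ≤ a)
    (γ : C(Set.Icc (0:ℝ) a, M)) (e : E) (he : π e = γ ⟨a, Set.right_mem_Icc.mpr ha⟩) :
    liftSeg hπ ha γ e he ⟨a, Set.right_mem_Icc.mpr ha⟩ = e :=
  (exists_liftSeg hπ ha γ e he).choose_spec.2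

lemma lift_unique {E M : Type*} [TopologicalSpace E] [TopologicalSpace M]
    {π : E → M} (hπ : IsCoveringMap π) {a : ℝ} (ha : 0 ≤ a)
    (Γ₁ Γ₂ : C(Set.Icc (0:ℝ) a, E)) (hp : ∀ t, π (Γ₁ t) = π (Γ₂ t))
    (hend : Γ₁ ⟨a, Set.right_mem_Icc.mpr ha⟩ = Γ₂ ⟨a, Set.right_mem_Icc.mpr ha⟩) :
    Γ₁ = Γ₂ := by
  haveI : PreconnectedSpace (Set.Icc (0:ℝ) a) := Subtype.preconnectedSpace isPreconnected_Icc
  exact ContinuousMap.ext (congrFun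
    (hπ.eq_of_comp_eq Γ₁.continuous Γ₂.continuous (funext hp) _ hend))

section LiftString

variable {E M : Type*} [TopologicalSpace E] [TopologicalSpace M]
  {π : E → M} (hπ : IsCoveringMap π) {r : ℕ} (x : E)
  (k : Fin (r + 1) → ℕ) (c : ∀ i, Fin (k i) → M)
  (u : ∀ i : Fin r, Fin (k i.castSucc) → Fin (k i.succ))
  (a : Fin r → ℝ) (ha : ∀ i, 0 ≤ a i)
  (h : ∀ i : Fin r, Fin (k i.castSucc) → C(Set.Icc (0 : ℝ) (a i), M))
  (hx : ∀ j, c (Fin.last r) j = π x)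
  (h1 : ∀ i j, h i j ⟨a i, Set.right_mem_Icc.mpr (ha i)⟩ = c i.succ (u i j))
  (h0 : ∀ i j, h i j ⟨0, Set.left_mem_Icc.mpr (ha i)⟩ = c i.castSucc j)

/-- Recursive lift of the configurations of a raw string, from the top down. -/
noncomputable def liftC : ∀ i : Fin (r + 1), {cc : Fin (k i) → E // ∀ j, π (cc j) = c i j} :=
  Fin.reverseInduction
    ⟨fun _ => x, fun j => (hx j).symm⟩
    (fun i prev =>
      ⟨fun j => liftSeg hπ (ha i) (h i j) (prev.1 (u i j))
          ((prev.2 (u i j)).trans (h1 i j).symm) ⟨0, Set.left_mem_Icc.mpr (ha i)⟩,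
        fun j => (liftSeg_proj hπ (ha i) (h i j) _ _ _).trans (h0 i j)⟩)

/-- Recursive lift of the Moore homotopies of a raw string. -/
noncomputable def liftH (i : Fin r) (j : Fin (k i.castSucc)) : C(Set.Icc (0 : ℝ) (a i), E) :=
  liftSeg hπ (ha i) (h i j) ((liftC hπ x k c u a ha h hx h1 h0 i.succ).1 (u i j))
    (((liftC hπ x k c u a ha h hx h1 h0 i.succ).2 (u i j)).trans (h1 i j).symm)

lemma liftC_last (j : Fin (k (Fin.last r))) :
    (liftC hπ x k c u a ha h hx h1 h0 (Fin.last r)).1 j = x := by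
  unfold liftC
  rw [Fin.reverseInduction_last]

lemma liftC_castSucc (i : Fin r) (j : Fin (k i.castSucc)) :
    (liftC hπ x k c u a ha h hx h1 h0 i.castSucc).1 j =
      liftH hπ x k c u a ha h hx h1 h0 i j ⟨0, Set.left_mem_Icc.mpr (ha i)⟩ := by
  unfold liftH liftC
  rw [Fin.reverseInduction_castSucc]

end LiftString

/-- Two raw strings with the same combinatorial data and equal configurations and
homotopies are equal. -/
lemma rawmk_congr {X : Type*} [TopologicalSpace X] {r : ℕ} {x : X}
    {k : Fin (r + 1) → ℕ} {c₁ c₂ : ∀ i, Fin (k i) → X}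
    {u : ∀ i : Fin r, Fin (k i.castSucc) → Fin (k i.succ)}
    {a : Fin r → ℝ} {ha : ∀ i, 0 ≤ a i}
    {h₁ h₂ : ∀ i : Fin r, Fin (k i.castSucc) → C(Set.Icc (0 : ℝ) (a i), X)}
    {hk : k (Fin.last r) = 1}
    {hx₁ : ∀ j, c₁ (Fin.last r) j = x} {hx₂ : ∀ j, c₂ (Fin.last r) j = x}
    {h01 : ∀ i j, h₁ i j ⟨0, Set.left_mem_Icc.mpr (ha i)⟩ = c₁ i.castSucc j}
    {h02 : ∀ i j, h₂ i j ⟨0, Set.left_mem_Icc.mpr (ha i)⟩ = c₂ i.castSucc j}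
    {h11 : ∀ i j, h₁ i j ⟨a i, Set.right_mem_Icc.mpr (ha i)⟩ = c₁ i.succ (u i j)}
    {h12 : ∀ i j, h₂ i j ⟨a i, Set.right_mem_Icc.mpr (ha i)⟩ = c₂ i.succ (u i j)}
    (hc : c₁ = c₂) (hh : h₁ = h₂) :
    RawString.mk k c₁ u a ha h₁ hk hx₁ h01 h11 =
      RawString.mk k c₂ u a ha h₂ hk hx₂ h02 h12 := by
  subst hc; subst hh; rfl

/-- for a covering map `π : E → M` and `x ∈ E`, unique path
lifting induces, for each `r ≥ 0`, a bijection between strings of `r`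
composable configuration morphisms in `M` with ultimate target the singleton
configuration at `π x` and such strings in `E` with ultimate target the
singleton configuration at `x`; the inverse is given by composing with `π`. -/
theorem strings_bijection_of_coveringMap
    {E M : Type*} [TopologicalSpace E] [TopologicalSpace M]
    (π : C(E, M)) (hπ : IsCoveringMap π) (x : E) (r : ℕ) :
    ∃ e : {s : RawString M r (π x) // s.IsConf} ≃
          {s : RawString E r x // s.IsConf},
      ∀ s, ((e s).1.map π) = s.1 := by
  classical
  -- every configuration in a conf string has at most one point
  have kle : ∀ (s : RawString E r x), s.IsConf → ∀ i, s.k i ≤ 1 := by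
    intro s hs
    refine Fin.reverseInduction ?_ ?_
    · exact le_of_eq s.hk
    · intro i hnext
      have hcu : Function.Injective fun j => s.c i.succ (s.u i j) := by
        have := hs.2 i ⟨s.a i, Set.right_mem_Icc.mpr (s.ha i)⟩
        simpa only [s.h1] using this
      have hu : Function.Injective (s.u i) := Function.Injective.of_comp hcu
      calc s.k i.castSucc = Fintype.card (Fin (s.k i.castSucc)) := (Fintype.card_fin _).symm
        _ ≤ Fintype.card (Fin (s.k i.succ)) := Fintype.card_le_of_injective _ hu
        _ = s.k i.succ := Fintype.card_fin _
        _ ≤ 1 := hnext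
  have conf_map : ∀ (s : RawString E r x), s.IsConf → (s.map π).IsConf := by
    intro s hs
    have hk1 := kle s hs
    constructor
    · intro i
      haveI : Subsingleton (Fin ((s.map π).k i)) :=
        Fin.subsingleton_iff_le_one.mpr (hk1 i)
      exact Function.injective_of_subsingleton _
    · intro i t
      haveI : Subsingleton (Fin ((s.map π).k i.castSucc)) :=
        Fin.subsingleton_iff_le_one.mpr (hk1 i.castSucc)
      exact Function.injective_of_subsingleton _
  have hbij : Function.Bijective
      (fun s : {s : RawString E r x // s.IsConf} =>
        (⟨s.1.map π, conf_map s.1 s.2⟩ : {s : RawString M r (π x) // s.IsConf})) := by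
    constructor
    · -- injectivity
      rintro ⟨s₁, hs₁⟩ ⟨s₂, hs₂⟩ hmap
      have hmap' : s₁.map π = s₂.map π := congrArg Subtype.val hmap
      apply Subtype.ext
      obtain ⟨k₁, c₁, u₁, a₁, ha₁, h₁, hk₁, hx₁, h01, h11⟩ := s₁
      obtain ⟨k₂, c₂, u₂, a₂, ha₂, h₂, hk₂, hx₂, h02, h12⟩ := s₂
      simp only [RawString.map, RawString.mk.injEq] at hmap'
      obtain ⟨hkk, hcc, huu, haa, hhh⟩ := hmap'
      subst hkk
      subst haa
      obtain rfl : u₁ = u₂ := eq_of_heq huu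
      replace hcc : (fun i j => π (c₁ i j)) = fun i j => π (c₂ i j) := eq_of_heq hcc
      replace hhh : (fun i j => π.comp (h₁ i j)) = fun i j => π.comp (h₂ i j) := eq_of_heq hhh
      have hpath : ∀ (i : Fin r) (j) (t), π (h₁ i j t) = π (h₂ i j t) := by
        intro i j t
        have := congrFun (congrFun hhh i) j
        simpa using ContinuousMap.congr_fun this t
      have hceq : ∀ i, c₁ i = c₂ i := by
        refine Fin.reverseInduction ?_ ?_
        · funext j
          rw [hx₁ j, hx₂ j]
        · intro i hnext
          have hpe : h₁ i = h₂ i := by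
            funext j
            refine lift_unique hπ (ha₁ i) _ _ (hpath i j) ?_
            rw [h11 i j, h12 i j, hnext]
          funext j
          rw [← h01 i j, ← h02 i j, hpe]
      have hc : c₁ = c₂ := funext hceq
      subst hc
      have hh : h₁ = h₂ := by
        funext i j
        refine lift_unique hπ (ha₁ i) _ _ (hpath i j) ?_
        rw [h11 i j, h12 i j]
      subst hh
      rfl
    · -- surjectivity
      rintro ⟨⟨k, c, u, a, ha', h, hk', hx', h0', h1'⟩, hs⟩
      have hproj : ∀ (i : Fin r) (j) (t),
          π (liftH hπ x k c u a ha' h hx' h1' h0' i j t) = h i j t := fun i j t =>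
        liftSeg_proj hπ (ha' i) (h i j) _ _ t
      refine ⟨⟨⟨k, fun i => (liftC hπ x k c u a ha' h hx' h1' h0' i).1, u, a, ha',
          liftH hπ x k c u a ha' h hx' h1' h0', hk',
          liftC_last hπ x k c u a ha' h hx' h1' h0',
          fun i j => (liftC_castSucc hπ x k c u a ha' h hx' h1' h0' i j).symm,
          fun i j => liftSeg_top hπ (ha' i) (h i j) _ _⟩, ?_⟩, ?_⟩
      · constructor
        · intro i j₁ j₂ hj
          apply hs.1 i
          dsimp only at hj ⊢
          rw [← (liftC hπ x k c u a ha' h hx' h1' h0' i).2 j₁,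
            ← (liftC hπ x k c u a ha' h hx' h1' h0' i).2 j₂]
          exact congrArg π hj
        · intro i t j₁ j₂ hj
          apply hs.2 i t
          dsimp only at hj ⊢
          rw [← hproj i j₁ t, ← hproj i j₂ t]
          exact congrArg π hj
      · apply Subtype.ext
        refine rawmk_congr ?_ ?_
        · funext i j
          exact (liftC hπ x k c u a ha' h hx' h1' h0' i).2 j
        · funext i j
          exact ContinuousMap.ext fun t => hproj i j t
  refine ⟨(Equiv.ofBijective _ hbij).symm, fun s => ?_⟩
  exact congrArg Subtype.val ((Equiv.ofBijective _ hbij).apply_symm_apply s)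
end
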